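/- It is false that for every n-tuple of single-qubit Clifford operators C₁,…,Cₙ, the restriction of C₁⊗…⊗Cₙ to the symmetric subspace of (C²)^⊗n is an (n+1)-dimensional Clifford operator; a counterexample is n = 2 with C₁ = C₂ = H (the Hadamard gate). -/

import Mathlib

/-! Conjugation by `H` swaps `X` and `Z`, and `ZX = ωXZ`, so `H` is a qubit Clifford. On the
symmetric subspace `H ⊗ H` acts, in the basis `symBasis`, by the real matrix `symHad`. A generalized
Pauli matrix `λ XᵃZᵇ` has exactly one nonzero entry in each row, whereas the first row of
`symHad Z₃ symHadᴴ` starts with `(1 + ω)² / 4` and `(1 - ω²) / (2√2)`, both nonzero because `ω` is a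
primitive cube root of unity. -/

open Matrix

/-- The primitive `d`-th root of unity `ω = exp(2πi/d)`. -/
noncomputable def omega (d : ℕ) : ℂ := Complex.exp (2 * Real.pi * Complex.I / d)

/-- The generalized Pauli `X` (cyclic shift) matrix: `X e_s = e_{s+1 mod d}`. -/
def PauliX (d : ℕ) [NeZero d] : Matrix (Fin d) (Fin d) ℂ :=
  Matrix.of fun i j => if i = j + 1 then 1 else 0

/-- The generalized Pauli `Z` (clock) matrix: `Z e_s = ω^s e_s`. -/
noncomputable def PauliZ (d : ℕ) [NeZero d] : Matrix (Fin d) (Fin d) ℂ :=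
  Matrix.diagonal fun s => omega d ^ (s : ℕ)

/-- The generalized Pauli group on `C^d`, up to unit-modulus phases. -/
noncomputable def PauliSet (d : ℕ) [NeZero d] : Set (Matrix (Fin d) (Fin d) ℂ) :=
  {M | ∃ (a b : ℕ) (lam : ℂ), ‖lam‖ = 1 ∧ M = lam • (PauliX d ^ a * PauliZ d ^ b)}

/-- A `d`-dimensional Clifford operator: a unitary mapping the generalized Pauli group
(up to phases) to itself under conjugation. -/
noncomputable def IsClifford (d : ℕ) [NeZero d] (U : Matrix (Fin d) (Fin d) ℂ) : Prop :=
  U ∈ Matrix.unitaryGroup (Fin d) ℂ ∧ ∀ M ∈ PauliSet d, U * M * Uᴴ ∈ PauliSet d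

/-- The Hadamard gate `H = (1/√2)[[1,1],[1,-1]]`. -/
noncomputable def Had : Matrix (Fin 2) (Fin 2) ℂ :=
  ((Real.sqrt 2 : ℂ))⁻¹ • !![1, 1; 1, -1]

/-- Basis of the symmetric subspace of `C² ⊗ C²`: `|00⟩, (|01⟩+|10⟩)/√2, |11⟩`. -/
noncomputable def symBasis : Fin 3 → (Fin 2 × Fin 2 → ℂ) :=
  ![Pi.single (0, 0) 1,
    ((Real.sqrt 2 : ℂ))⁻¹ • (Pi.single (0, 1) 1 + Pi.single (1, 0) 1),
    Pi.single (1, 1) 1]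


section QCommute

variable {R A : Type*} [CommSemiring R] [Semiring A] [Algebra R A] {x z : A} {c : R}

lemma mul_pow_eq_smul_of_mul_eq_smul (h : z * x = c • (x * z)) (b : ℕ) :
    z * x ^ b = c ^ b • (x ^ b * z) := by
  induction b with
  | zero => simp
  | succ b ih =>
    rw [pow_succ, ← mul_assoc, ih, smul_mul_assoc, mul_assoc, h, mul_smul_comm, smul_smul,
      ← pow_succ, pow_succ, mul_assoc]

lemma pow_mul_pow_eq_smul_of_mul_eq_smul (h : z * x = c • (x * z)) (a b : ℕ) :
    z ^ a * x ^ b = c ^ (a * b) • (x ^ b * z ^ a) := by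
  induction a with
  | zero => simp
  | succ a ih =>
    rw [pow_succ, mul_assoc, mul_pow_eq_smul_of_mul_eq_smul h, mul_smul_comm, ← mul_assoc, ih,
      smul_mul_assoc, smul_smul, ← pow_add, mul_assoc, ← pow_succ, add_mul, one_mul, add_comm]

end QCommute

lemma omega_isPrimitiveRoot (d : ℕ) [NeZero d] : IsPrimitiveRoot (omega d) d :=
  Complex.isPrimitiveRoot_exp d (NeZero.ne d)

lemma norm_omega (d : ℕ) [NeZero d] : ‖omega d‖ = 1 :=
  (omega_isPrimitiveRoot d).norm'_eq_one (NeZero.ne d)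

open Fin.NatCast in
lemma pauliX_pow_apply (d : ℕ) [NeZero d] (a : ℕ) (i j : Fin d) :
    (PauliX d ^ a) i j = if i = j + (a : Fin d) then 1 else 0 := by
  induction a generalizing i j with
  | zero => simp [one_apply]
  | succ a ih =>
    rw [pow_succ, mul_apply, Finset.sum_eq_single (j + 1)]
    · rw [ih]
      simp [PauliX, add_assoc, add_comm (1 : Fin d)]
    · intro k _ hk
      simp [PauliX, hk]
    · simp

lemma pauliZ_pow (d : ℕ) [NeZero d] (b : ℕ) :
    PauliZ d ^ b = diagonal fun s : Fin d => omega d ^ ((s : ℕ) * b) := by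
  simp [PauliZ, diagonal_pow, pow_mul]

lemma pauliZ_mul_pauliX (d : ℕ) [NeZero d] :
    PauliZ d * PauliX d = omega d • (PauliX d * PauliZ d) := by
  ext i j
  simp only [PauliZ, PauliX, diagonal_mul, mul_diagonal, Matrix.smul_apply,
    of_apply, smul_eq_mul]
  have hω := (omega_isPrimitiveRoot d).pow_eq_one
  split_ifs with h
  · rw [h, Fin.val_add, ← pow_eq_pow_mod _ hω, pow_add, Fin.val_one', ← pow_eq_pow_mod _ hω]
    ring
  · simp

lemma pauliZ_pow_mul_pauliX_pow_mem_pauliSet (d : ℕ) [NeZero d] (a b : ℕ) :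
    PauliZ d ^ a * PauliX d ^ b ∈ PauliSet d :=
  ⟨b, a, omega d ^ (a * b), by rw [norm_pow, norm_omega, one_pow],
    pow_mul_pow_eq_smul_of_mul_eq_smul (pauliZ_mul_pauliX d) a b⟩

lemma smul_mem_pauliSet {d : ℕ} [NeZero d] {μ : ℂ} (hμ : ‖μ‖ = 1)
    {M : Matrix (Fin d) (Fin d) ℂ} (hM : M ∈ PauliSet d) : μ • M ∈ PauliSet d := by
  obtain ⟨a, b, lam, hlam, rfl⟩ := hM
  exact ⟨a, b, μ * lam, by rw [norm_mul, hμ, hlam, one_mul], smul_smul μ lam _⟩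

lemma isClifford_of_conj_pauliX_eq_of_conj_pauliZ_eq (d : ℕ) [NeZero d]
    {U : Matrix (Fin d) (Fin d) ℂ} (hU : U ∈ unitaryGroup (Fin d) ℂ)
    (hX : U * PauliX d * Uᴴ = PauliZ d) (hZ : U * PauliZ d * Uᴴ = PauliX d) :
    IsClifford d U := by
  refine ⟨hU, ?_⟩
  rintro _ ⟨a, b, lam, hlam, rfl⟩
  let conjU := Unitary.conjStarAlgAut ℂ (Matrix (Fin d) (Fin d) ℂ) ⟨U, hU⟩
  change conjU (lam • (PauliX d ^ a * PauliZ d ^ b)) ∈ PauliSet d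
  rw [map_smul, map_mul, map_pow, map_pow]
  change lam • ((U * PauliX d * Uᴴ) ^ a * (U * PauliZ d * Uᴴ) ^ b) ∈ PauliSet d
  rw [hX, hZ]
  exact smul_mem_pauliSet hlam (pauliZ_pow_mul_pauliX_pow_mem_pauliSet d a b)

lemma inv_sqrt_two_mul_self : ((Real.sqrt 2 : ℂ))⁻¹ * ((Real.sqrt 2 : ℂ))⁻¹ = 2⁻¹ := by
  rw [← mul_inv, ← Complex.ofReal_mul, Real.mul_self_sqrt zero_le_two, Complex.ofReal_ofNat]

lemma pauliX_two : PauliX 2 = !![0, 1; 1, 0] := by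
  ext i j; fin_cases i <;> fin_cases j <;> simp [PauliX]

lemma pauliZ_two : PauliZ 2 = !![1, 0; 0, -1] := by
  ext i j; fin_cases i <;> fin_cases j <;>
    simp [PauliZ, (omega_isPrimitiveRoot 2).eq_neg_one_of_two_right]

lemma conjTranspose_had : Hadᴴ = Had := by
  ext i j; fin_cases i <;> fin_cases j <;> simp [Had]

lemma had_mul_had : Had * Had = 1 := by
  ext i j; fin_cases i <;> fin_cases j <;>
    simp [Had, mul_apply, inv_sqrt_two_mul_self] <;> norm_num

lemma had_mul_pauliX_mul_had : Had * PauliX 2 * Had = PauliZ 2 := by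
  ext i j; fin_cases i <;> fin_cases j <;>
    simp [Had, pauliX_two, pauliZ_two, mul_apply, inv_sqrt_two_mul_self] <;> norm_num

lemma had_mul_pauliZ_mul_had : Had * PauliZ 2 * Had = PauliX 2 := by
  rw [← had_mul_pauliX_mul_had, ← mul_assoc, ← mul_assoc, had_mul_had, one_mul, mul_assoc,
    had_mul_had, mul_one]

lemma isClifford_had : IsClifford 2 Had := by
  have hU : Had ∈ unitaryGroup (Fin 2) ℂ := by
    rw [mem_unitaryGroup_iff, star_eq_conjTranspose, conjTranspose_had, had_mul_had]
  apply isClifford_of_conj_pauliX_eq_of_conj_pauliZ_eq 2 hU <;> rw [conjTranspose_had]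
  exacts [had_mul_pauliX_mul_had, had_mul_pauliZ_mul_had]

open Fin.NatCast in
lemma eq_of_mem_pauliSet_of_apply_ne_zero {d : ℕ} [NeZero d] {M : Matrix (Fin d) (Fin d) ℂ}
    (hM : M ∈ PauliSet d) {i j k : Fin d} (hj : M i j ≠ 0) (hk : M i k ≠ 0) : j = k := by
  obtain ⟨a, b, lam, -, rfl⟩ := hM
  have hrow : ∀ l, (lam • (PauliX d ^ a * PauliZ d ^ b)) i l ≠ 0 → i = l + (a : Fin d) := by
    intro l hl
    by_contra hil
    simp [pauliZ_pow, pauliX_pow_apply, hil] at hl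
  exact add_right_cancel ((hrow j hj).symm.trans (hrow k hk))

lemma pauliZ_mem_pauliSet (d : ℕ) [NeZero d] : PauliZ d ∈ PauliSet d :=
  ⟨0, 1, 1, norm_one, by simp⟩

noncomputable def symHad : Matrix (Fin 3) (Fin 3) ℂ :=
  !![1 / 2, (Real.sqrt 2 : ℂ)⁻¹, 1 / 2;
     (Real.sqrt 2 : ℂ)⁻¹, 0, -(Real.sqrt 2 : ℂ)⁻¹;
     1 / 2, -(Real.sqrt 2 : ℂ)⁻¹, 1 / 2]

lemma symHad_mul_pauliZ_mul_conjTranspose_apply_zero_zero :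
    (symHad * PauliZ 3 * symHadᴴ) 0 0 = (1 + omega 3) ^ 2 / 4 := by
  simp [symHad, PauliZ, mul_apply, Fin.sum_univ_three, vecMul_diagonal,
    map_ofNat]
  linear_combination omega 3 * inv_sqrt_two_mul_self

lemma symHad_mul_pauliZ_mul_conjTranspose_apply_zero_one :
    (symHad * PauliZ 3 * symHadᴴ) 0 1 = (1 - omega 3 ^ 2) / (2 * Real.sqrt 2) := by
  simp [symHad, PauliZ, mul_apply, Fin.sum_univ_three, vecMul_diagonal]
  ring

lemma not_isClifford_symHad : ¬ IsClifford 3 symHad := by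
  rintro ⟨-, hconj⟩
  have hsq : omega 3 ^ 2 ≠ 1 :=
    (omega_isPrimitiveRoot 3).pow_ne_one_of_pos_of_lt two_ne_zero (by norm_num)
  have h00 : (symHad * PauliZ 3 * symHadᴴ) 0 0 ≠ 0 := by
    rw [symHad_mul_pauliZ_mul_conjTranspose_apply_zero_zero]
    refine div_ne_zero (pow_ne_zero 2 fun h ↦ hsq ?_) (by norm_num)
    rw [eq_neg_of_add_eq_zero_right h, neg_one_sq]
  have h01 : (symHad * PauliZ 3 * symHadᴴ) 0 1 ≠ 0 := by
    rw [symHad_mul_pauliZ_mul_conjTranspose_apply_zero_one]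
    refine div_ne_zero (sub_ne_zero.mpr hsq.symm) ?_
    norm_num
  exact absurd (eq_of_mem_pauliSet_of_apply_ne_zero (hconj _ (pauliZ_mem_pauliSet 3)) h00 h01)
    (by decide)

lemma kronecker_had_mulVec_symBasis (i : Fin 3) :
    kroneckerMap (· * ·) Had Had *ᵥ symBasis i = ∑ j : Fin 3, symHad j i • symBasis j := by
  fin_cases i <;> funext ⟨p, q⟩ <;> fin_cases p <;> fin_cases q <;>
    simp [Had, symBasis, symHad, mulVec, dotProduct, Fintype.sum_prod_type,
      Fin.sum_univ_three, Pi.single_apply, inv_sqrt_two_mul_self] <;> ring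

/-- It is false that for every pair of single-qubit Clifford operators `C₁, C₂`, the
restriction of `C₁ ⊗ C₂` to the symmetric subspace of `C² ⊗ C²` is a (3-dimensional)
Clifford operator; a counterexample is `C₁ = C₂ = H` (the Hadamard gate). -/
theorem stmt17 :
    (¬ ∀ C₁ C₂ : Matrix (Fin 2) (Fin 2) ℂ, IsClifford 2 C₁ → IsClifford 2 C₂ →
      ∀ R : Matrix (Fin 3) (Fin 3) ℂ,
        (∀ i : Fin 3, (Matrix.kroneckerMap (· * ·) C₁ C₂) *ᵥ symBasis i
            = ∑ j : Fin 3, R j i • symBasis j) →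
        IsClifford 3 R) ∧
    IsClifford 2 Had ∧
    ∃ R : Matrix (Fin 3) (Fin 3) ℂ,
      (∀ i : Fin 3, (Matrix.kroneckerMap (· * ·) Had Had) *ᵥ symBasis i
          = ∑ j : Fin 3, R j i • symBasis j) ∧
      ¬ IsClifford 3 R := by
  have hcounter := kronecker_had_mulVec_symBasis
  exact ⟨fun h ↦ not_isClifford_symHad (h Had Had isClifford_had isClifford_had symHad hcounter),
    isClifford_had, symHad, hcounter, not_isClifford_symHad⟩
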